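/- For τ ∈ ℝ and finitely supported v, w : ℤ^d → ℂ, let R_τ(v, w) denote the relation: for every k ∈ ℤ^d, w_k = e^{−iτ|k|²} v_k − i(τ/8) e^{−iτ|k|²} Σ_{−k₁+k₂+k₃=k} (φ₁(2iτ|k₁|²) − φ₂(2iτ|k₁|²)) · (conj(v_{k₁}) + e^{−iτ|k₁|²} conj(w_{k₁})) (v_{k₂} + e^{iτ|k₂|²} w_{k₂}) (v_{k₃} + e^{iτ|k₃|²} w_{k₃}) − i(τ/8) Σ_{−k₁+k₂+k₃=k} φ₂(2iτ|k₁|²) · (e^{−iτ|k₁|²} conj(v_{k₁}) + e^{−2iτ|k₁|²} conj(w_{k₁})) (e^{−iτ|k₂|²} v_{k₂} + w_{k₂}) (e^{−iτ|k₃|²} v_{k₃} + w_{k₃}). Then R is symmetric: for all τ ∈ ℝ and all finitely supported v, w, R_τ(v, w) holds if and only if R_{−τ}(w, v) holds. -/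

import Mathlib

/-- `φ₁(z) = (exp z - 1)/z` for `z ≠ 0`, `φ₁(0) = 1`. -/
noncomputable def phi1 (z : ℂ) : ℂ := if z = 0 then 1 else (Complex.exp z - 1) / z

/-- `φ₂(z) = (exp z - 1 - z)/z²` for `z ≠ 0`, `φ₂(0) = 1/2`. -/
noncomputable def phi2 (z : ℂ) : ℂ :=
  if z = 0 then 1 / 2 else (Complex.exp z - 1 - z) / z ^ 2

/-- `|k|² = k·k` for a frequency `k ∈ ℤ^d`, as a complex number. -/
noncomputable def nsq {d : ℕ} (k : Fin d → ℤ) : ℂ := ∑ i, ((k i : ℂ)) ^ 2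

/-- One step of the second-order resonance-based midpoint scheme for the cubic
nonlinear Schrödinger equation on `𝕋^d`, in Fourier coordinates: `nlsMid2R τ v w`
holds iff for every `k ∈ ℤ^d`,
`w_k = e^{-iτ|k|²} v_k
  - i(τ/8) e^{-iτ|k|²} Σ_{-k₁+k₂+k₃=k} (φ₁(2iτ|k₁|²) - φ₂(2iτ|k₁|²))
      (conj v_{k₁} + e^{-iτ|k₁|²} conj w_{k₁})(v_{k₂} + e^{iτ|k₂|²} w_{k₂})(v_{k₃} + e^{iτ|k₃|²} w_{k₃})
  - i(τ/8) Σ_{-k₁+k₂+k₃=k} φ₂(2iτ|k₁|²)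
      (e^{-iτ|k₁|²} conj v_{k₁} + e^{-2iτ|k₁|²} conj w_{k₁})(e^{-iτ|k₂|²} v_{k₂} + w_{k₂})(e^{-iτ|k₃|²} v_{k₃} + w_{k₃})`,
where the convolution constraint `-k₁+k₂+k₃ = k` has been solved as `k₃ = k + k₁ - k₂`. -/
noncomputable def nlsMid2R {d : ℕ} (τ : ℝ) (v w : (Fin d → ℤ) →₀ ℂ) : Prop :=
  ∀ k : Fin d → ℤ,
    w k = Complex.exp (-(Complex.I * (τ : ℂ) * nsq k)) * v k
      - Complex.I * ((τ : ℂ) / 8) * Complex.exp (-(Complex.I * (τ : ℂ) * nsq k)) *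
          (∑ᶠ k₁ : Fin d → ℤ, ∑ᶠ k₂ : Fin d → ℤ,
            (phi1 (2 * Complex.I * (τ : ℂ) * nsq k₁) -
                phi2 (2 * Complex.I * (τ : ℂ) * nsq k₁)) *
              (((starRingEnd ℂ) (v k₁) +
                  Complex.exp (-(Complex.I * (τ : ℂ) * nsq k₁)) * (starRingEnd ℂ) (w k₁)) *
                (v k₂ + Complex.exp (Complex.I * (τ : ℂ) * nsq k₂) * w k₂) *
                (v (k + k₁ - k₂) +
                  Complex.exp (Complex.I * (τ : ℂ) * nsq (k + k₁ - k₂)) * w (k + k₁ - k₂))))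
      - Complex.I * ((τ : ℂ) / 8) *
          (∑ᶠ k₁ : Fin d → ℤ, ∑ᶠ k₂ : Fin d → ℤ,
            phi2 (2 * Complex.I * (τ : ℂ) * nsq k₁) *
              ((Complex.exp (-(Complex.I * (τ : ℂ) * nsq k₁)) * (starRingEnd ℂ) (v k₁) +
                  Complex.exp (-(2 * Complex.I * (τ : ℂ) * nsq k₁)) * (starRingEnd ℂ) (w k₁)) *
                (Complex.exp (-(Complex.I * (τ : ℂ) * nsq k₂)) * v k₂ + w k₂) *
                (Complex.exp (-(Complex.I * (τ : ℂ) * nsq (k + k₁ - k₂))) * v (k + k₁ - k₂) +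
                  w (k + k₁ - k₂))))

/-! Since `φ₁(z) - φ₂(z) = e^z φ₂(-z)`, each summand of the first convolution sum of
`R_{-τ}(w, v)` equals the corresponding summand of the second sum of `R_τ(v, w)`, and vice
versa. With the same two sums on both sides, multiplying the equation for `w_k` by
`e^{iτ|k|²}` solves it for `v_k`, which is the equation of `R_{-τ}(w, v)`. -/

open Complex

lemma phi1_sub_phi2 (z : ℂ) : phi1 z - phi2 z = exp z * phi2 (-z) := by
  rcases eq_or_ne z 0 with rfl | hz
  · norm_num [phi1, phi2]
  · rw [phi1, phi2, phi2, if_neg hz, if_neg hz, if_neg (neg_ne_zero.mpr hz), exp_neg]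
    field_simp [exp_ne_zero z]
    ring

lemma eq_exp_neg_mul_sub_iff (c s v w P Q : ℂ) :
    w = exp (-c) * v - s * exp (-c) * P - s * Q ↔ v = exp c * w + s * exp c * Q + s * P := by
  have h : exp c * exp (-c) = 1 := by rw [← exp_add]; simp
  constructor <;> intro e
  · linear_combination (-exp c) * e + (s * P - v) * h
  · linear_combination (-exp (-c)) * e + (-(w + s * Q)) * h

section

variable {d : ℕ}

noncomputable def nlsMid2RSummand₁ (τ : ℝ) (v w : (Fin d → ℤ) →₀ ℂ) (k k₁ k₂ : Fin d → ℤ) : ℂ :=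
  (phi1 (2 * I * (τ : ℂ) * nsq k₁) - phi2 (2 * I * (τ : ℂ) * nsq k₁)) *
    (((starRingEnd ℂ) (v k₁) + exp (-(I * (τ : ℂ) * nsq k₁)) * (starRingEnd ℂ) (w k₁)) *
      (v k₂ + exp (I * (τ : ℂ) * nsq k₂) * w k₂) *
      (v (k + k₁ - k₂) + exp (I * (τ : ℂ) * nsq (k + k₁ - k₂)) * w (k + k₁ - k₂)))

noncomputable def nlsMid2RSummand₂ (τ : ℝ) (v w : (Fin d → ℤ) →₀ ℂ) (k k₁ k₂ : Fin d → ℤ) : ℂ :=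
  phi2 (2 * I * (τ : ℂ) * nsq k₁) *
    ((exp (-(I * (τ : ℂ) * nsq k₁)) * (starRingEnd ℂ) (v k₁) +
        exp (-(2 * I * (τ : ℂ) * nsq k₁)) * (starRingEnd ℂ) (w k₁)) *
      (exp (-(I * (τ : ℂ) * nsq k₂)) * v k₂ + w k₂) *
      (exp (-(I * (τ : ℂ) * nsq (k + k₁ - k₂))) * v (k + k₁ - k₂) + w (k + k₁ - k₂)))

lemma nlsMid2R_iff_summands (τ : ℝ) (v w : (Fin d → ℤ) →₀ ℂ) :
    nlsMid2R τ v w ↔ ∀ k, w k = exp (-(I * τ * nsq k)) * v k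
      - I * (τ / 8) * exp (-(I * τ * nsq k)) * ∑ᶠ k₁, ∑ᶠ k₂, nlsMid2RSummand₁ τ v w k k₁ k₂
      - I * (τ / 8) * ∑ᶠ k₁, ∑ᶠ k₂, nlsMid2RSummand₂ τ v w k k₁ k₂ :=
  Iff.rfl

lemma nlsMid2RSummand₁_neg_swap (τ : ℝ) (v w : (Fin d → ℤ) →₀ ℂ) (k k₁ k₂ : Fin d → ℤ) :
    nlsMid2RSummand₁ (-τ) w v k k₁ k₂ = nlsMid2RSummand₂ τ v w k k₁ k₂ := by
  have hsq : exp (-(2 * I * τ * nsq k₁)) = exp (-(I * τ * nsq k₁)) ^ 2 := by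
    rw [← exp_nat_mul]; ring_nf
  have hinv : exp (I * τ * nsq k₁) = (exp (-(I * τ * nsq k₁)))⁻¹ := by
    rw [exp_neg, inv_inv]
  rw [nlsMid2RSummand₁, nlsMid2RSummand₂, phi1_sub_phi2]
  simp only [ofReal_neg, mul_neg, neg_mul, neg_neg, hsq, hinv]
  field_simp [exp_ne_zero]
  ring

lemma nlsMid2RSummand₂_neg_swap (τ : ℝ) (v w : (Fin d → ℤ) →₀ ℂ) (k k₁ k₂ : Fin d → ℤ) :
    nlsMid2RSummand₂ (-τ) w v k k₁ k₂ = nlsMid2RSummand₁ τ v w k k₁ k₂ := by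
  simpa using (nlsMid2RSummand₁_neg_swap (-τ) w v k k₁ k₂).symm

end

/-- The one-step relation of the second-order resonance-based midpoint NLS scheme is
symmetric: `R_τ(v, w)` holds iff `R_{-τ}(w, v)` holds. -/
theorem nlsMid2R_symmetric {d : ℕ} (τ : ℝ) (v w : (Fin d → ℤ) →₀ ℂ) :
    nlsMid2R τ v w ↔ nlsMid2R (-τ) w v := by
  simp only [nlsMid2R_iff_summands, nlsMid2RSummand₁_neg_swap, nlsMid2RSummand₂_neg_swap]
  refine forall_congr' fun k => ?_
  rw [eq_exp_neg_mul_sub_iff]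
  simp only [ofReal_neg, mul_neg, neg_mul, neg_neg, neg_div, sub_neg_eq_add]
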